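/- Let ω be an open subset of ℂ and let u : ℂ → ℂ be a smooth function whose (compact) support is contained in ω. Then for every ξ ∈ ω, the integral ∫_ω ∂̄u(z)/(z − ξ) dλ(z) with respect to Lebesgue measure λ on ℂ converges, and u(ξ) = −(1/π) ∫_ω ∂̄u(z)/(z − ξ) dλ(z). (Equivalently, u(ξ) = (2iπ)^{-1} ∫_ω ∂̄u(z)(z − ξ)^{-1} dz ∧ dz̄, since dz ∧ dz̄ = −2i dλ.) -/

import Mathlib

open Complex MeasureTheory Set

/-- The Wirtinger derivative `∂̄u = (∂ₓu + i ∂_y u)/2` of a function `u : ℂ → ℂ`,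
viewing `ℂ ≅ ℝ²`. -/
noncomputable def dbar (u : ℂ → ℂ) (z : ℂ) : ℂ :=
  (fderiv ℝ u z 1 + Complex.I * fderiv ℝ u z Complex.I) / 2

private lemma aux_int {f : ℝ × ℝ → ℂ} (hf : Continuous f) {M : ℝ}
    (h0 : ∀ p : ℝ × ℝ, M ≤ p.1 → f p = 0) :
    IntegrableOn f polarCoord.target := by
  have hsub : polarCoord.target ⊆
      (Set.Ioc 0 M ×ˢ Set.Ioo (-Real.pi) Real.pi) ∪ {p : ℝ × ℝ | M < p.1} := by
    rintro ⟨r, θ⟩ hp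
    by_cases h : r ≤ M
    · exact Or.inl ⟨⟨hp.1, h⟩, hp.2⟩
    · exact Or.inr (lt_of_not_ge h)
  refine IntegrableOn.mono_set (IntegrableOn.union ?_ ?_) hsub
  · exact ((hf.continuousOn.integrableOn_compact (isCompact_Icc.prod isCompact_Icc)).mono_set
      (Set.prod_mono Set.Ioc_subset_Icc_self Set.Ioo_subset_Icc_self))
  · exact (integrableOn_zero).congr_fun (fun p hp => (h0 p (le_of_lt hp)).symm)
      (measurableSet_lt measurable_const measurable_fst)

private lemma aux_int_line {f : ℝ → ℂ} (hf : Continuous f) {M : ℝ}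
    (h0 : ∀ r : ℝ, M ≤ r → f r = 0) :
    IntegrableOn f (Set.Ioi 0) := by
  have hsub : Set.Ioi (0:ℝ) ⊆ Set.Ioc 0 M ∪ Set.Ioi M := by
    intro r hr
    by_cases h : r ≤ M
    · exact Or.inl ⟨hr, h⟩
    · exact Or.inr (lt_of_not_ge h)
  refine IntegrableOn.mono_set (IntegrableOn.union ?_ ?_) hsub
  · exact (hf.continuousOn.integrableOn_compact isCompact_Icc).mono_set Set.Ioc_subset_Icc_self
  · exact (integrableOn_zero).congr_fun (fun r hr => (h0 r (le_of_lt hr)).symm) measurableSet_Ioi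

private lemma key_alg (a b c s : ℂ) (r : ℝ) (hr : (r:ℂ) ≠ 0) (hcs : c^2 + s^2 = 1) :
    r • ((a + Complex.I * b) / 2 / ((r:ℂ) * (c + s * Complex.I))) =
      (c * a + s * b) / 2 + Complex.I * (c * b - s * a) / 2 := by
  have hI : Complex.I * Complex.I = -1 := Complex.I_mul_I
  have hne : c + s * Complex.I ≠ 0 := by
    intro h
    apply one_ne_zero (α := ℂ)
    rw [← hcs]
    linear_combination (c - s * Complex.I) * h + s^2 * hI
  have hD : (r:ℂ) * (c + s * Complex.I) ≠ 0 := mul_ne_zero hr hne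
  rw [Complex.real_smul, ← mul_div_assoc, div_eq_iff hD]
  linear_combination (-(r:ℂ) * (a + Complex.I * b) / 2) * hcs +
    (-(r:ℂ) * (c * s * b - s^2 * a) / 2) * hI

private lemma integrable_of_polar_real {E : Type*} [NormedAddCommGroup E] [NormedSpace ℝ E]
    (f : ℝ × ℝ → E)
    (hf : IntegrableOn (fun p : ℝ × ℝ => p.1 • f (polarCoord.symm p)) polarCoord.target) :
    Integrable f := by
  have key : IntegrableOn f polarCoord.source := by
    rw [← polarCoord.symm_image_target_eq_source,
      integrableOn_image_iff_integrableOn_abs_det_fderiv_smul volume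
        polarCoord.open_target.measurableSet
        (fun p _ => (hasFDerivAt_polarCoord_symm p).hasFDerivWithinAt) polarCoord.symm.injOn f]
    refine hf.congr_fun (fun p hp => ?_) polarCoord.open_target.measurableSet
    have hdet : (LinearMap.toContinuousLinearMap (Matrix.toLin (Module.Basis.finTwoProd ℝ)
        (Module.Basis.finTwoProd ℝ) !![Real.cos p.2, -p.1 * Real.sin p.2;
          Real.sin p.2, p.1 * Real.cos p.2])).det = p.1 := by
      conv_rhs => rw [← one_mul p.1, ← Real.cos_sq_add_sin_sq p.2]
      simp only [neg_mul, LinearMap.det_toContinuousLinearMap, LinearMap.det_toLin,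
        Matrix.det_fin_two_of, sub_neg_eq_add]
      ring
    simp only [hdet, det_fderivPolarCoordSymm, abs_of_pos (show 0 < p.1 from hp.1)]
  exact integrableOn_univ.mp (key.congr_set_ae polarCoord_source_ae_eq_univ.symm)

private lemma integrable_of_polar_complex (f : ℂ → ℂ)
    (hf : IntegrableOn (fun p : ℝ × ℝ => p.1 • f (Complex.polarCoord.symm p)) polarCoord.target) :
    Integrable f := by
  rw [← (Complex.volume_preserving_equiv_real_prod.symm).integrable_comp_emb
    Complex.measurableEquivRealProd.symm.measurableEmbedding]
  exact integrable_of_polar_real _ hf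

/-- `cos θ + i sin θ` as a complex number. -/
private noncomputable def eC (θ : ℝ) : ℂ := (Real.cos θ : ℂ) + (Real.sin θ : ℂ) * Complex.I

private lemma eC_cs (θ : ℝ) : ((Real.cos θ : ℂ))^2 + ((Real.sin θ : ℂ))^2 = 1 := by
  rw [← Complex.ofReal_pow, ← Complex.ofReal_pow, ← Complex.ofReal_add,
    Real.cos_sq_add_sin_sq, Complex.ofReal_one]

private lemma eC_exp (θ : ℝ) : eC θ = Complex.exp (θ * Complex.I) := by
  rw [Complex.exp_mul_I, eC, Complex.ofReal_cos, Complex.ofReal_sin]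

private lemma eC_abs (θ : ℝ) : ‖eC θ‖ = 1 := by
  rw [eC_exp]
  exact Complex.norm_exp_ofReal_mul_I θ

private lemma eC_cont : Continuous eC := by
  unfold eC; continuity

private lemma polar_symm_eq (p : ℝ × ℝ) :
    Complex.polarCoord.symm p = (p.1 : ℂ) * eC p.2 := by
  rw [Complex.polarCoord_symm_apply, eC]

/-- first component of the polar integrand -/
private noncomputable def AA (u : ℂ → ℂ) (ξ : ℂ) (p : ℝ × ℝ) : ℂ :=
  ((Real.cos p.2 : ℂ) * fderiv ℝ u (ξ + (p.1:ℂ) * eC p.2) 1 +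
    (Real.sin p.2 : ℂ) * fderiv ℝ u (ξ + (p.1:ℂ) * eC p.2) Complex.I) / 2

/-- second component of the polar integrand -/
private noncomputable def BB (u : ℂ → ℂ) (ξ : ℂ) (p : ℝ × ℝ) : ℂ :=
  Complex.I * ((Real.cos p.2 : ℂ) * fderiv ℝ u (ξ + (p.1:ℂ) * eC p.2) Complex.I -
    (Real.sin p.2 : ℂ) * fderiv ℝ u (ξ + (p.1:ℂ) * eC p.2) 1) / 2

/-- the angular derivative -/
private noncomputable def WW (u : ℂ → ℂ) (ξ : ℂ) (r θ : ℝ) : ℂ :=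
  (r:ℂ) * ((Real.cos θ : ℂ) * fderiv ℝ u (ξ + (r:ℂ) * eC θ) Complex.I -
    (Real.sin θ : ℂ) * fderiv ℝ u (ξ + (r:ℂ) * eC θ) 1)

private lemma hasDerivAt_F {u : ℂ → ℂ} (hdiff : Differentiable ℝ u) (ξ : ℂ) (θ : ℝ) (r : ℝ) :
    HasDerivAt (fun t : ℝ => u (ξ + (t:ℂ) * eC θ)) (2 * AA u ξ (r, θ)) r := by
  have h0 : HasDerivAt (fun t : ℝ => (t:ℂ)) 1 r := by
    simpa using (hasDerivAt_id r).ofReal_comp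
  have h1 : HasDerivAt (fun t : ℝ => ξ + (t:ℂ) * eC θ) (eC θ) r := by
    simpa using (h0.mul_const (eC θ)).const_add ξ
  have h2 := ((hdiff (ξ + (r:ℂ) * eC θ)).hasFDerivAt).comp_hasDerivAt r h1
  refine h2.congr_deriv ?_
  symm
  have hsplit : eC θ = (Real.cos θ : ℝ) • (1:ℂ) + (Real.sin θ : ℝ) • Complex.I := by
    simp [eC, Complex.real_smul]
  set L := fderiv ℝ u (ξ + (r:ℂ) * eC θ) with hL
  rw [hsplit, map_add, L.map_smul, L.map_smul]
  simp only [AA, Complex.real_smul, ← hL]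
  ring

private lemma hasDerivAt_G {u : ℂ → ℂ} (hdiff : Differentiable ℝ u) (ξ : ℂ) (r : ℝ) (θ : ℝ) :
    HasDerivAt (fun t : ℝ => u (ξ + (r:ℂ) * eC t)) (WW u ξ r θ) θ := by
  have hcos : HasDerivAt (fun t : ℝ => (Real.cos t : ℂ)) (-(Real.sin θ):ℂ) θ := by
    simpa using (Real.hasDerivAt_cos θ).ofReal_comp
  have hsin : HasDerivAt (fun t : ℝ => (Real.sin t : ℂ)) ((Real.cos θ):ℂ) θ := by
    simpa using (Real.hasDerivAt_sin θ).ofReal_comp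
  have he' : HasDerivAt (fun t : ℝ => eC t) (-(Real.sin θ:ℂ) + (Real.cos θ:ℂ) * Complex.I) θ := by
    simp only [eC]
    exact hcos.add (hsin.mul_const Complex.I)
  have h1 : HasDerivAt (fun t : ℝ => ξ + (r:ℂ) * eC t)
      ((r:ℂ) * (-(Real.sin θ:ℂ) + (Real.cos θ:ℂ) * Complex.I)) θ := by
    simpa using (he'.const_mul ((r:ℂ))).const_add ξ
  have h2 := ((hdiff (ξ + (r:ℂ) * eC θ)).hasFDerivAt).comp_hasDerivAt θ h1
  refine h2.congr_deriv ?_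
  symm
  have hsplit : (r:ℂ) * (-(Real.sin θ:ℂ) + (Real.cos θ:ℂ) * Complex.I)
      = (-(r * Real.sin θ) : ℝ) • (1:ℂ) + ((r * Real.cos θ : ℝ)) • Complex.I := by
    simp [Complex.real_smul]
    push_cast
    ring
  set L := fderiv ℝ u (ξ + (r:ℂ) * eC θ) with hL
  rw [hsplit, map_add, L.map_smul, L.map_smul]
  simp only [WW, Complex.real_smul, ← hL]
  push_cast
  ring

/-- Cauchy–Pompeiu formula for a smooth function with compact support contained
in an open set `ω`: the integral `∫_ω ∂̄u(z)/(z − ξ) dλ(z)` converges and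
`u(ξ) = −(1/π) ∫_ω ∂̄u(z)/(z − ξ) dλ(z)` for every `ξ ∈ ω`. -/
theorem stmt1 (ω : Set ℂ) (hω : IsOpen ω) (u : ℂ → ℂ) (hu : ContDiff ℝ (⊤ : ℕ∞) u)
    (huc : HasCompactSupport u) (hsupp : tsupport u ⊆ ω) :
    ∀ ξ ∈ ω,
      IntegrableOn (fun z : ℂ => dbar u z / (z - ξ)) ω volume ∧
      u ξ = -(1 / Real.pi : ℝ) • ∫ z in ω, dbar u z / (z - ξ) := by
  intro ξ _hξ
  have hdiff : Differentiable ℝ u := hu.differentiable (by simp)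
  have hucont : Continuous u := hu.continuous
  have hfc : Continuous (fderiv ℝ u) := hu.continuous_fderiv (by simp)
  have hfd0 : ∀ z, z ∉ tsupport u → fderiv ℝ u z = 0 := by
    intro z hz
    have h0 : u =ᶠ[nhds z] (fun _ => (0:ℂ)) := notMem_tsupport_iff_eventuallyEq.mp hz
    rw [h0.fderiv_eq]
    exact fderiv_const_apply 0
  obtain ⟨M, hM0, hMsub⟩ : ∃ M, 0 < M ∧ tsupport u ⊆ Metric.ball ξ M := by
    obtain ⟨r, hr0, hr⟩ := huc.isBounded.subset_ball_lt 0 ξ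
    exact ⟨r, hr0, hr⟩
  have hvan : ∀ w : ℂ, M ≤ ‖w‖ → ξ + w ∉ tsupport u := by
    intro w hw hmem
    have h := hMsub hmem
    rw [Metric.mem_ball, Complex.dist_eq, add_sub_cancel_left] at h
    exact absurd h (not_lt.mpr hw)
  have hvan' : ∀ p : ℝ × ℝ, M ≤ p.1 → ξ + (p.1:ℂ) * eC p.2 ∉ tsupport u := by
    intro p hp
    apply hvan
    rw [norm_mul, eC_abs, mul_one, Complex.norm_real, Real.norm_eq_abs]
    exact le_trans hp (le_abs_self _)
  set g : ℂ → ℂ := fun w => dbar u (ξ + w) / w with hg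
  -- continuity of the pieces
  have hzmap : Continuous fun p : ℝ × ℝ => ξ + (p.1 : ℂ) * eC p.2 :=
    continuous_const.add ((Complex.continuous_ofReal.comp continuous_fst).mul
      (eC_cont.comp continuous_snd))
  have hc1 : Continuous fun p : ℝ × ℝ => fderiv ℝ u (ξ + (p.1:ℂ) * eC p.2) 1 :=
    (hfc.comp hzmap).clm_apply continuous_const
  have hcI : Continuous fun p : ℝ × ℝ => fderiv ℝ u (ξ + (p.1:ℂ) * eC p.2) Complex.I :=
    (hfc.comp hzmap).clm_apply continuous_const
  have hcoscont : Continuous fun p : ℝ × ℝ => ((Real.cos p.2 : ℂ)) :=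
    Complex.continuous_ofReal.comp (Real.continuous_cos.comp continuous_snd)
  have hsincont : Continuous fun p : ℝ × ℝ => ((Real.sin p.2 : ℂ)) :=
    Complex.continuous_ofReal.comp (Real.continuous_sin.comp continuous_snd)
  have hAc : Continuous (AA u ξ) := by
    unfold AA
    exact ((hcoscont.mul hc1).add (hsincont.mul hcI)).div_const 2
  have hBc : Continuous (BB u ξ) := by
    unfold BB
    exact (continuous_const.mul ((hcoscont.mul hcI).sub (hsincont.mul hc1))).div_const 2
  have hAz : ∀ p : ℝ × ℝ, M ≤ p.1 → AA u ξ p = 0 := by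
    intro p hp
    simp [AA, hfd0 _ (hvan' p hp)]
  have hBz : ∀ p : ℝ × ℝ, M ≤ p.1 → BB u ξ p = 0 := by
    intro p hp
    simp [BB, hfd0 _ (hvan' p hp)]
  have hAint : IntegrableOn (AA u ξ) polarCoord.target := aux_int hAc hAz
  have hBint : IntegrableOn (BB u ξ) polarCoord.target := aux_int hBc hBz
  -- the key pointwise identity
  have hkey : ∀ p ∈ polarCoord.target,
      p.1 • g (Complex.polarCoord.symm p) = AA u ξ p + BB u ξ p := by
    rintro ⟨r, θ⟩ hp
    have hr : 0 < r := hp.1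
    have hr0 : (r:ℂ) ≠ 0 := by exact_mod_cast hr.ne'
    simp only [hg, polar_symm_eq]
    simpa [dbar, AA, BB, eC] using
      key_alg (fderiv ℝ u (ξ + (r:ℂ) * eC θ) 1) (fderiv ℝ u (ξ + (r:ℂ) * eC θ) Complex.I)
        (Real.cos θ : ℂ) (Real.sin θ : ℂ) r hr0 (eC_cs θ)
  have hhint : IntegrableOn (fun p : ℝ × ℝ => p.1 • g (Complex.polarCoord.symm p))
      polarCoord.target :=
    MeasureTheory.IntegrableOn.congr_fun (MeasureTheory.Integrable.add hAint hBint)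
      (fun p hp => (hkey p hp).symm) polarCoord.open_target.measurableSet
  have hgInt : Integrable g := integrable_of_polar_complex g hhint
  -- inner radial integral
  have hinner : ∀ θ : ℝ, ∫ r in Set.Ioi (0:ℝ), AA u ξ (r, θ) = -(u ξ) / 2 := by
    intro θ
    have hW1c : Continuous fun r : ℝ => 2 * AA u ξ (r, θ) :=
      continuous_const.mul (hAc.comp (continuous_id.prodMk continuous_const))
    have hW1z : ∀ r : ℝ, M ≤ r → 2 * AA u ξ (r, θ) = 0 := by
      intro r hr; rw [hAz (r, θ) hr, mul_zero]
    have hW1int : IntegrableOn (fun r : ℝ => 2 * AA u ξ (r, θ)) (Set.Ioi 0) :=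
      aux_int_line hW1c hW1z
    have hFc : Continuous fun t : ℝ => u (ξ + (t:ℂ) * eC θ) :=
      hucont.comp (continuous_const.add ((Complex.continuous_ofReal).mul continuous_const))
    have hFtop : Filter.Tendsto (fun t : ℝ => u (ξ + (t:ℂ) * eC θ)) Filter.atTop (nhds 0) := by
      apply Filter.Tendsto.congr' _ (tendsto_const_nhds (x := (0:ℂ)))
      filter_upwards [Filter.eventually_ge_atTop M] with r hr
      exact (image_eq_zero_of_notMem_tsupport (hvan' (r, θ) hr)).symm
    have hIoi := MeasureTheory.integral_Ioi_of_hasDerivAt_of_tendsto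
      (a := 0) hFc.continuousWithinAt (fun x _ => hasDerivAt_F hdiff ξ θ x) hW1int hFtop
    simp only [Complex.ofReal_zero, zero_mul, add_zero, zero_sub] at hIoi
    rw [MeasureTheory.integral_const_mul] at hIoi
    linear_combination hIoi / 2
  -- value of the A-integral
  have hAval : ∫ p in polarCoord.target, AA u ξ p = -(Real.pi : ℂ) * u ξ := by
    rw [polarCoord_target, Measure.volume_eq_prod, ← Measure.prod_restrict]
    have hint' : Integrable (AA u ξ)
        ((volume.restrict (Set.Ioi (0:ℝ))).prod (volume.restrict (Set.Ioo (-Real.pi) Real.pi))) := by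
      rw [Measure.prod_restrict, ← Measure.volume_eq_prod]
      exact hAint
    rw [integral_prod_symm _ hint']
    simp only [hinner]
    rw [MeasureTheory.setIntegral_const, Real.volume_real_Ioo_of_le (by linarith [Real.pi_pos]), sub_neg_eq_add,
      Complex.real_smul]
    push_cast
    ring
  -- value of the B-integral
  have hBval : ∫ p in polarCoord.target, BB u ξ p = 0 := by
    rw [polarCoord_target, Measure.volume_eq_prod, ← Measure.prod_restrict]
    have hint'' : Integrable (BB u ξ)
        ((volume.restrict (Set.Ioi (0:ℝ))).prod (volume.restrict (Set.Ioo (-Real.pi) Real.pi))) := by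
      rw [Measure.prod_restrict, ← Measure.volume_eq_prod]
      exact hBint
    rw [integral_prod _ hint'']
    apply MeasureTheory.integral_eq_zero_of_ae
    filter_upwards [MeasureTheory.ae_restrict_mem measurableSet_Ioi] with r hr
    have hr0 : (r:ℂ) ≠ 0 := by
      exact_mod_cast (ne_of_gt (Set.mem_Ioi.mp hr))
    have hBW : ∀ θ : ℝ, BB u ξ (r, θ) = (Complex.I / (2*(r:ℂ))) * WW u ξ r θ := by
      intro θ
      simp only [BB, WW]
      field_simp
    have hWc : Continuous (WW u ξ r) := by
      unfold WW
      refine continuous_const.mul (Continuous.sub ?_ ?_)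
      · exact (Complex.continuous_ofReal.comp Real.continuous_cos).mul
          ((hfc.comp (continuous_const.add
            (continuous_const.mul eC_cont))).clm_apply continuous_const)
      · exact (Complex.continuous_ofReal.comp Real.continuous_sin).mul
          ((hfc.comp (continuous_const.add
            (continuous_const.mul eC_cont))).clm_apply continuous_const)
    have hWzero : ∫ θ in Set.Ioo (-Real.pi) Real.pi, WW u ξ r θ = 0 := by
      rw [← MeasureTheory.integral_Ioc_eq_integral_Ioo,
        ← intervalIntegral.integral_of_le (by linarith [Real.pi_pos])]
      rw [intervalIntegral.integral_eq_sub_of_hasDerivAt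
        (fun x _ => hasDerivAt_G hdiff ξ r x) (hWc.intervalIntegrable _ _)]
      simp [eC, Real.cos_pi, Real.sin_pi, Real.cos_neg, Real.sin_neg]
    simp only [hBW]
    rw [MeasureTheory.integral_const_mul, hWzero, mul_zero]
    rfl
  -- total value of the integral of g
  have hgval : ∫ w, g w = -(Real.pi:ℂ) * u ξ := by
    rw [← Complex.integral_comp_polarCoord_symm g,
      MeasureTheory.setIntegral_congr_fun polarCoord.open_target.measurableSet hkey,
      MeasureTheory.integral_add hAint hBint, hAval, hBval, add_zero]
  -- integrability of the original integrand
  have hmain : Integrable (fun z : ℂ => dbar u z / (z - ξ)) := by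
    have h1 : Integrable (fun z : ℂ => g (z + -ξ)) := hgInt.comp_add_right (-ξ)
    have heq : (fun z : ℂ => g (z + -ξ)) = fun z : ℂ => dbar u z / (z - ξ) := by
      funext z
      simp only [hg, ← sub_eq_add_neg, add_sub_cancel]
    rwa [heq] at h1
  refine ⟨hmain.integrableOn, ?_⟩
  have hωzero : ∀ z : ℂ, z ∉ ω → dbar u z / (z - ξ) = 0 := by
    intro z hz
    have hzt : z ∉ tsupport u := fun h => hz (hsupp h)
    rw [show dbar u z = 0 by simp [dbar, hfd0 z hzt], zero_div]
  rw [MeasureTheory.setIntegral_eq_integral_of_forall_compl_eq_zero hωzero]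
  have htrans : (∫ z : ℂ, dbar u z / (z - ξ)) = ∫ w, g w := by
    rw [← MeasureTheory.integral_add_left_eq_self (fun z : ℂ => dbar u z / (z - ξ)) ξ]
    congr 1
    funext w
    simp only [hg, add_sub_cancel_left]
  rw [htrans, hgval, Complex.real_smul]
  have hπ : (Real.pi : ℂ) ≠ 0 := by exact_mod_cast Real.pi_ne_zero
  push_cast
  field_simp
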